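/- arXiv:2302.10411 — 3 statements merged into one kernel-verified Lean document; each statement's English description precedes it below -/
import Mathlib

section
/- Let A ∈ ℝ^{n×n}, B ∈ ℝ^{n×m} be arbitrary, let P₁ ⪯ P₂ be symmetric positive definite n×n matrices, R₁ ⪯ R₂ symmetric positive definite m×m matrices, and Q₁ ⪯ Q₂ symmetric positive semidefinite n×n matrices. Then the Riccati-type map is monotone: Q₁ + Aᵀ(P₁^{−1} + BR₁^{−1}Bᵀ)^{−1}A ⪯ Q₂ + Aᵀ(P₂^{−1} + BR₂^{−1}Bᵀ)^{−1}A. -/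
open Matrix

/-- Antitonicity of the inverse on positive definite matrices. -/
lemma inv_antitone {n : ℕ} {F G : Matrix (Fin n) (Fin n) ℝ}
    (hF : F.PosDef) (hG : G.PosDef) (h : (G - F).PosSemidef) :
    (F⁻¹ - G⁻¹).PosSemidef := by
  have hFu : IsUnit F.det := isUnit_iff_ne_zero.mpr hF.det_pos.ne'
  have hGu : IsUnit G.det := isUnit_iff_ne_zero.mpr hG.det_pos.ne'
  have hFi := hF.inv
  have hGi := hG.inv
  have hKsym : (F⁻¹ - G⁻¹).IsHermitian := hFi.isHermitian.sub hGi.isHermitian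
  have key : F⁻¹ - G⁻¹ =
      (F⁻¹ - G⁻¹)ᴴ * F * (F⁻¹ - G⁻¹) + (G⁻¹)ᴴ * (G - F) * G⁻¹ := by
    rw [hKsym.eq, hGi.isHermitian.eq]
    simp only [Matrix.sub_mul, Matrix.mul_sub, Matrix.mul_assoc,
      Matrix.nonsing_inv_mul_cancel_left _ _ hFu,
      Matrix.nonsing_inv_mul_cancel_left _ _ hGu,
      Matrix.mul_nonsing_inv_cancel_left _ _ hFu,
      Matrix.mul_nonsing_inv_cancel_left _ _ hGu,
      Matrix.nonsing_inv_mul _ hFu, Matrix.nonsing_inv_mul _ hGu,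
      Matrix.mul_nonsing_inv _ hFu, Matrix.mul_nonsing_inv _ hGu,
      Matrix.mul_one, Matrix.one_mul]
    abel
  rw [key]
  exact (hF.posSemidef.conjTranspose_mul_mul_same (F⁻¹ - G⁻¹)).add
    (h.conjTranspose_mul_mul_same G⁻¹)

/-- Monotonicity of the Riccati-type map
`(Q, P, R) ↦ Q + Aᵀ(P⁻¹ + BR⁻¹Bᵀ)⁻¹A` in the Loewner order. -/
theorem riccati_map_monotone {n m : ℕ} (hn : 1 ≤ n) (hm : 1 ≤ m)
    (A : Matrix (Fin n) (Fin n) ℝ) (B : Matrix (Fin n) (Fin m) ℝ)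
    (P₁ P₂ : Matrix (Fin n) (Fin n) ℝ) (hP₁ : P₁.PosDef) (hP₂ : P₂.PosDef)
    (hP₁₂ : (P₂ - P₁).PosSemidef)
    (R₁ R₂ : Matrix (Fin m) (Fin m) ℝ) (hR₁ : R₁.PosDef) (hR₂ : R₂.PosDef)
    (hR₁₂ : (R₂ - R₁).PosSemidef)
    (Q₁ Q₂ : Matrix (Fin n) (Fin n) ℝ) (hQ₁ : Q₁.PosSemidef) (hQ₂ : Q₂.PosSemidef)
    (hQ₁₂ : (Q₂ - Q₁).PosSemidef) :
    ((Q₂ + Aᵀ * (P₂⁻¹ + B * R₂⁻¹ * Bᵀ)⁻¹ * A) -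
      (Q₁ + Aᵀ * (P₁⁻¹ + B * R₁⁻¹ * Bᵀ)⁻¹ * A)).PosSemidef := by
  set M₁ := P₁⁻¹ + B * R₁⁻¹ * Bᵀ with hM₁def
  set M₂ := P₂⁻¹ + B * R₂⁻¹ * Bᵀ with hM₂def
  have hPinv : (P₁⁻¹ - P₂⁻¹).PosSemidef := inv_antitone hP₁ hP₂ hP₁₂
  have hRinv : (R₁⁻¹ - R₂⁻¹).PosSemidef := inv_antitone hR₁ hR₂ hR₁₂
  have hBRB : (B * (R₁⁻¹ - R₂⁻¹) * Bᵀ).PosSemidef := by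
    have := hRinv.mul_mul_conjTranspose_same B
    simpa using this
  have hM₁ : M₁.PosDef := hP₁.inv.add_posSemidef
    (by simpa using hR₁.inv.posSemidef.mul_mul_conjTranspose_same B)
  have hM₂ : M₂.PosDef := hP₂.inv.add_posSemidef
    (by simpa using hR₂.inv.posSemidef.mul_mul_conjTranspose_same B)
  have hMdiff : (M₁ - M₂).PosSemidef := by
    have heq : M₁ - M₂ = (P₁⁻¹ - P₂⁻¹) + B * (R₁⁻¹ - R₂⁻¹) * Bᵀ := by
      rw [hM₁def, hM₂def, Matrix.mul_sub, Matrix.sub_mul]; abel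
    rw [heq]; exact hPinv.add hBRB
  have hMinv : (M₂⁻¹ - M₁⁻¹).PosSemidef := inv_antitone hM₂ hM₁ hMdiff
  have hAMA : (Aᵀ * (M₂⁻¹ - M₁⁻¹) * A).PosSemidef := by
    have := hMinv.conjTranspose_mul_mul_same A
    simpa using this
  have heq : (Q₂ + Aᵀ * M₂⁻¹ * A) - (Q₁ + Aᵀ * M₁⁻¹ * A)
      = (Q₂ - Q₁) + Aᵀ * (M₂⁻¹ - M₁⁻¹) * A := by
    rw [Matrix.mul_sub, Matrix.sub_mul]; abel
  rw [heq]
  exact hQ₁₂.add hAMA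
end

section
/- For every 0 ≤ i ≤ T−1 and 0 ≤ s ≤ T−1, the matrix P_{i|s} of the truncated Riccati recursion is symmetric and satisfies Q̄_min ⪯ P_{i|s} ⪯ P̄_max; in particular every P_{i|s} is positive definite. -/
open Matrix Finset
open scoped Matrix.Norms.L2Operator

noncomputable section

/-- Euclidean norm of a real vector. -/
def enorm {k : ℕ} (x : Fin k → ℝ) : ℝ := ‖(WithLp.equiv 2 (Fin k → ℝ)).symm x‖

/-- Largest eigenvalue (supremum of the real spectrum) of a square real matrix. -/
def lmax {k : ℕ} (M : Matrix (Fin k) (Fin k) ℝ) : ℝ := sSup (spectrum ℝ M)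

/-- Smallest eigenvalue (infimum of the real spectrum) of a square real matrix. -/
def lmin {k : ℕ} (M : Matrix (Fin k) (Fin k) ℝ) : ℝ := sInf (spectrum ℝ M)

variable {n m : ℕ}

/-- The LQR feedback gain associated with cost matrix `R` and value matrix `P'`. -/
def gainK (A : Matrix (Fin n) (Fin n) ℝ) (B : Matrix (Fin n) (Fin m) ℝ)
    (R : Matrix (Fin m) (Fin m) ℝ) (P' : Matrix (Fin n) (Fin n) ℝ) :
    Matrix (Fin m) (Fin n) ℝ :=
  -((R + Bᵀ * P' * B)⁻¹ * Bᵀ * P' * A)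

/-- One backwards Riccati step. -/
def ricStep (A : Matrix (Fin n) (Fin n) ℝ) (B : Matrix (Fin n) (Fin m) ℝ)
    (R : Matrix (Fin m) (Fin m) ℝ) (Q P' : Matrix (Fin n) (Fin n) ℝ) :
    Matrix (Fin n) (Fin n) ℝ :=
  Aᵀ * P' * A + Q + Aᵀ * P' * B * gainK A B R P'

/-- Truncated cost matrices `Q_{i|s}`. -/
def trunc {N : Type*} (Q : ℕ → N) (i s : ℕ) : N := if i ≤ s then Q i else Q s

/-- Backwards truncated Riccati recursion: `ricBackTr A B T Q R s d = P_{T-1-d|s}`. -/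
def ricBackTr (A : Matrix (Fin n) (Fin n) ℝ) (B : Matrix (Fin n) (Fin m) ℝ) (T : ℕ)
    (Q : ℕ → Matrix (Fin n) (Fin n) ℝ) (R : ℕ → Matrix (Fin m) (Fin m) ℝ) (s : ℕ) :
    ℕ → Matrix (Fin n) (Fin n) ℝ
  | 0 => trunc Q (T - 1) s
  | d + 1 => ricStep A B (trunc R (T - 2 - d) s) (trunc Q (T - 2 - d) s)
      (ricBackTr A B T Q R s d)

/-- `Pts A B T Q R i s = P_{i|s}`, the truncated Riccati value matrix. -/
def Pts (A : Matrix (Fin n) (Fin n) ℝ) (B : Matrix (Fin n) (Fin m) ℝ) (T : ℕ)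
    (Q : ℕ → Matrix (Fin n) (Fin n) ℝ) (R : ℕ → Matrix (Fin m) (Fin m) ℝ) (i s : ℕ) :
    Matrix (Fin n) (Fin n) ℝ :=
  ricBackTr A B T Q R s (T - 1 - i)

/-- `Kts A B T Q R i s = K_{i|s}`, the truncated Riccati gain. -/
def Kts (A : Matrix (Fin n) (Fin n) ℝ) (B : Matrix (Fin n) (Fin m) ℝ) (T : ℕ)
    (Q : ℕ → Matrix (Fin n) (Fin n) ℝ) (R : ℕ → Matrix (Fin m) (Fin m) ℝ) (i s : ℕ) :
    Matrix (Fin m) (Fin n) ℝ :=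
  gainK A B (trunc R i s) (Pts A B T Q R (i + 1) s)

/-- `xts A B T Q R x₀ s i = x_{i|s}`, the predicted trajectory planned with information up to
time `s`. -/
def xts (A : Matrix (Fin n) (Fin n) ℝ) (B : Matrix (Fin n) (Fin m) ℝ) (T : ℕ)
    (Q : ℕ → Matrix (Fin n) (Fin n) ℝ) (R : ℕ → Matrix (Fin m) (Fin m) ℝ)
    (x₀ : Fin n → ℝ) (s : ℕ) : ℕ → Fin n → ℝ
  | 0 => x₀
  | i + 1 => (A + B * Kts A B T Q R i s) *ᵥ xts A B T Q R x₀ s i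

/-! For every gain `K`, the cost `Q + (A + B K)ᵀ P (A + B K) + Kᵀ R K` of the feedback `u = K x`
exceeds the Riccati step by `(K - K₀)ᵀ (R + Bᵀ P B) (K - K₀)`, where `K₀` is the Riccati gain. So
the step is the Loewner-least such cost; as each cost is monotone in `(R, Q, P)` and dominates `Q`,
the step is monotone and dominates `Q`. Running the recursion backwards, `P_{i|s}` therefore stays
above `Q̄_min` and below the fixed point `P̄_max` of the step with the largest costs. -/

open scoped MatrixOrder

namespace Matrix

open scoped ComplexOrder in
lemma PosDef.of_le {ι 𝕜 : Type*} [RCLike 𝕜] {M N : Matrix ι ι 𝕜} (hM : M.PosDef) (h : M ≤ N) :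
    N.PosDef :=
  add_sub_cancel M N ▸ hM.add_posSemidef h

variable {ι κ : Type*} [Fintype ι] [Fintype κ]

lemma PosSemidef.transpose_mul_mul_same {P : Matrix κ κ ℝ} (hP : P.PosSemidef)
    (M : Matrix κ ι ℝ) : (Mᵀ * P * M).PosSemidef := by
  simpa using hP.conjTranspose_mul_mul_same M

lemma transpose_mul_mul_le_transpose_mul_mul {P₁ P₂ : Matrix κ κ ℝ} (h : P₁ ≤ P₂)
    (M : Matrix κ ι ℝ) : Mᵀ * P₁ * M ≤ Mᵀ * P₂ * M := by
  rw [le_iff, ← Matrix.sub_mul, ← Matrix.mul_sub]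
  exact (le_iff.mp h).transpose_mul_mul_same M

end Matrix

lemma trunc_eq_min {N : Type*} (Q : ℕ → N) (i s : ℕ) : trunc Q i s = Q (min i s) := by
  unfold trunc
  split_ifs with h
  · rw [min_eq_left h]
  · rw [min_eq_right (by omega)]

section Riccati

variable (A : Matrix (Fin n) (Fin n) ℝ) (B : Matrix (Fin n) (Fin m) ℝ)

def feedbackCost (R : Matrix (Fin m) (Fin m) ℝ) (Q P : Matrix (Fin n) (Fin n) ℝ)
    (K : Matrix (Fin m) (Fin n) ℝ) : Matrix (Fin n) (Fin n) ℝ :=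
  Q + (A + B * K)ᵀ * P * (A + B * K) + Kᵀ * R * K

lemma ricStep_eq_sub (R : Matrix (Fin m) (Fin m) ℝ) (Q P : Matrix (Fin n) (Fin n) ℝ) :
    ricStep A B R Q P = Q + Aᵀ * P * A - Aᵀ * P * B * (R + Bᵀ * P * B)⁻¹ * Bᵀ * P * A := by
  simp only [ricStep, gainK, Matrix.mul_neg, Matrix.mul_assoc, sub_eq_add_neg]
  abel

lemma feedbackCost_eq_ricStep_add {R : Matrix (Fin m) (Fin m) ℝ} {Q P : Matrix (Fin n) (Fin n) ℝ}
    (hR : R.IsSymm) (hP : P.IsSymm) (hS : IsUnit (R + Bᵀ * P * B).det)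
    (K : Matrix (Fin m) (Fin n) ℝ) :
    feedbackCost A B R Q P K = ricStep A B R Q P +
      (K - gainK A B R P)ᵀ * (R + Bᵀ * P * B) * (K - gainK A B R P) := by
  set S := R + Bᵀ * P * B with hS_def
  set K₀ := gainK A B R P with hK₀
  have hSt : Sᵀ = S := by
    rw [hS_def, transpose_add, hR.eq, transpose_mul, transpose_mul, transpose_transpose, hP.eq,
      Matrix.mul_assoc]
  have hSK₀ : S * K₀ = -(Bᵀ * P * A) := by
    rw [hK₀, gainK, ← hS_def, Matrix.mul_neg, Matrix.mul_assoc, Matrix.mul_assoc,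
      ← Matrix.mul_assoc S, Matrix.mul_nonsing_inv _ hS, Matrix.one_mul, Matrix.mul_assoc]
  have hK₀S : K₀ᵀ * S = -(Aᵀ * P * B) := by
    rw [← hSt, ← transpose_mul, hSK₀, transpose_neg, transpose_mul, transpose_mul,
      transpose_transpose, hP.eq, Matrix.mul_assoc]
  have h₁ : Kᵀ * S * K₀ = -(Kᵀ * (Bᵀ * P * A)) := by
    rw [Matrix.mul_assoc, hSK₀, Matrix.mul_neg]
  have h₂ : K₀ᵀ * S * K = -(Aᵀ * P * B * K) := by rw [hK₀S, Matrix.neg_mul]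
  have h₃ : K₀ᵀ * S * K₀ = -(Aᵀ * P * B * K₀) := by rw [hK₀S, Matrix.neg_mul]
  rw [feedbackCost, ricStep, ← hK₀]
  simp only [transpose_sub, Matrix.sub_mul, Matrix.mul_sub]
  rw [h₁, h₂, h₃, hS_def]
  simp only [transpose_add, transpose_mul, Matrix.add_mul, Matrix.mul_add, Matrix.mul_assoc]
  abel

variable {A B}

lemma posDef_add_transpose_mul_mul {R : Matrix (Fin m) (Fin m) ℝ} {P : Matrix (Fin n) (Fin n) ℝ}
    (hR : R.PosDef) (hP : 0 ≤ P) : (R + Bᵀ * P * B).PosDef :=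
  hR.add_posSemidef (hP.posSemidef.transpose_mul_mul_same B)

lemma ricStep_le_feedbackCost {R : Matrix (Fin m) (Fin m) ℝ} {Q P : Matrix (Fin n) (Fin n) ℝ}
    (hR : R.PosDef) (hP : 0 ≤ P) (K : Matrix (Fin m) (Fin n) ℝ) :
    ricStep A B R Q P ≤ feedbackCost A B R Q P K := by
  have hS := posDef_add_transpose_mul_mul (B := B) hR hP
  rw [feedbackCost_eq_ricStep_add A B (isHermitian_iff_isSymm.mp hR.isHermitian)
    (isHermitian_iff_isSymm.mp hP.posSemidef.isHermitian) hS.det_pos.ne'.isUnit K]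
  exact le_add_of_nonneg_right (hS.posSemidef.transpose_mul_mul_same _).nonneg

lemma ricStep_eq_feedbackCost_gainK {R : Matrix (Fin m) (Fin m) ℝ}
    {Q P : Matrix (Fin n) (Fin n) ℝ} (hR : R.PosDef) (hP : 0 ≤ P) :
    ricStep A B R Q P = feedbackCost A B R Q P (gainK A B R P) := by
  have hS := posDef_add_transpose_mul_mul (B := B) hR hP
  rw [feedbackCost_eq_ricStep_add A B (isHermitian_iff_isSymm.mp hR.isHermitian)
    (isHermitian_iff_isSymm.mp hP.posSemidef.isHermitian) hS.det_pos.ne'.isUnit, sub_self,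
    Matrix.mul_zero, add_zero]

lemma le_feedbackCost {R : Matrix (Fin m) (Fin m) ℝ} {Q P : Matrix (Fin n) (Fin n) ℝ}
    (hR : 0 ≤ R) (hP : 0 ≤ P) (K : Matrix (Fin m) (Fin n) ℝ) : Q ≤ feedbackCost A B R Q P K :=
  le_add_of_le_of_nonneg
    (le_add_of_nonneg_right (hP.posSemidef.transpose_mul_mul_same _).nonneg)
    (hR.posSemidef.transpose_mul_mul_same _).nonneg

lemma feedbackCost_mono {R₁ R₂ : Matrix (Fin m) (Fin m) ℝ} {Q₁ Q₂ P₁ P₂ : Matrix (Fin n) (Fin n) ℝ}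
    (hR : R₁ ≤ R₂) (hQ : Q₁ ≤ Q₂) (hP : P₁ ≤ P₂) (K : Matrix (Fin m) (Fin n) ℝ) :
    feedbackCost A B R₁ Q₁ P₁ K ≤ feedbackCost A B R₂ Q₂ P₂ K :=
  add_le_add (add_le_add hQ (transpose_mul_mul_le_transpose_mul_mul hP _))
    (transpose_mul_mul_le_transpose_mul_mul hR _)

lemma le_ricStep {R : Matrix (Fin m) (Fin m) ℝ} {Q P : Matrix (Fin n) (Fin n) ℝ}
    (hR : R.PosDef) (hP : 0 ≤ P) : Q ≤ ricStep A B R Q P := by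
  rw [ricStep_eq_feedbackCost_gainK hR hP]
  exact le_feedbackCost hR.posSemidef.nonneg hP _

lemma ricStep_mono {R₁ R₂ : Matrix (Fin m) (Fin m) ℝ} {Q₁ Q₂ P₁ P₂ : Matrix (Fin n) (Fin n) ℝ}
    (hR₁ : R₁.PosDef) (hP₁ : 0 ≤ P₁) (hR : R₁ ≤ R₂) (hQ : Q₁ ≤ Q₂) (hP : P₁ ≤ P₂) :
    ricStep A B R₁ Q₁ P₁ ≤ ricStep A B R₂ Q₂ P₂ :=
  calc ricStep A B R₁ Q₁ P₁
      ≤ feedbackCost A B R₁ Q₁ P₁ (gainK A B R₂ P₂) := ricStep_le_feedbackCost hR₁ hP₁ _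
    _ ≤ feedbackCost A B R₂ Q₂ P₂ (gainK A B R₂ P₂) := feedbackCost_mono hR hQ hP _
    _ = ricStep A B R₂ Q₂ P₂ := (ricStep_eq_feedbackCost_gainK (hR₁.of_le hR) (hP₁.trans hP)).symm

lemma ricBackTr_mem_Icc {T : ℕ} {Q : ℕ → Matrix (Fin n) (Fin n) ℝ}
    {R : ℕ → Matrix (Fin m) (Fin m) ℝ} {Qmin Qmax Pmax : Matrix (Fin n) (Fin n) ℝ}
    {Rmax : Matrix (Fin m) (Fin m) ℝ} (hQmin : 0 ≤ Qmin)
    (hQ : ∀ t ≤ T - 1, Q t ∈ Set.Icc Qmin Qmax) (hR : ∀ t ≤ T - 2, (R t).PosDef ∧ R t ≤ Rmax)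
    (hQmax : Qmax ≤ Pmax) (hPmax : ricStep A B Rmax Qmax Pmax = Pmax) (s d : ℕ) :
    ricBackTr A B T Q R s d ∈ Set.Icc Qmin Pmax := by
  induction d with
  | zero =>
    rw [ricBackTr, trunc_eq_min]
    obtain ⟨hlb, hub⟩ := hQ _ (min_le_left _ _)
    exact ⟨hlb, hub.trans hQmax⟩
  | succ d ih =>
    rw [ricBackTr, trunc_eq_min, trunc_eq_min]
    obtain ⟨hQlb, hQub⟩ := hQ (min (T - 2 - d) s) (by omega)
    obtain ⟨hRpd, hRub⟩ := hR (min (T - 2 - d) s) (by omega)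
    have hP : 0 ≤ ricBackTr A B T Q R s d := hQmin.trans ih.1
    exact ⟨hQlb.trans (le_ricStep hRpd hP), hPmax ▸ ricStep_mono hRpd hP hRub hQub ih.2⟩

end Riccati

theorem truncated_riccati_sandwich_general {n m : ℕ}
    (A : Matrix (Fin n) (Fin n) ℝ) (B : Matrix (Fin n) (Fin m) ℝ)
    (T : ℕ)
    (Q : ℕ → Matrix (Fin n) (Fin n) ℝ) (R : ℕ → Matrix (Fin m) (Fin m) ℝ)
    (hR : ∀ t ≤ T - 2, (R t).PosDef)
    (Qmin Qmax : Matrix (Fin n) (Fin n) ℝ) (Rmax : Matrix (Fin m) (Fin m) ℝ)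
    (hQminPD : Qmin.PosDef)
    (hQlb : ∀ t ≤ T - 1, (Q t - Qmin).PosSemidef)
    (hQub : ∀ t ≤ T - 1, (Qmax - Q t).PosSemidef)
    (hRub : ∀ t ≤ T - 2, (Rmax - R t).PosSemidef)
    (Pm : Matrix (Fin n) (Fin n) ℝ) (hPmPD : Pm.PosDef)
    (hDARE : Pm = Qmax + Aᵀ * Pm * A -
      Aᵀ * Pm * B * (Rmax + Bᵀ * Pm * B)⁻¹ * Bᵀ * Pm * A) :
    ∀ i ≤ T - 1, ∀ s ≤ T - 1,
      (Pts A B T Q R i s).IsHermitian ∧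
      (Pts A B T Q R i s - Qmin).PosSemidef ∧
      (Pm - Pts A B T Q R i s).PosSemidef ∧
      (Pts A B T Q R i s).PosDef := by
  have hRmax : Rmax.PosDef := (hR 0 (Nat.zero_le _)).of_le (hRub 0 (Nat.zero_le _))
  have hfix : ricStep A B Rmax Qmax Pm = Pm := by rw [ricStep_eq_sub, ← hDARE]
  have hQmax : Qmax ≤ Pm := hfix ▸ le_ricStep hRmax hPmPD.posSemidef.nonneg
  intro i _ s _
  obtain ⟨hlb, hub⟩ := ricBackTr_mem_Icc hQminPD.posSemidef.nonneg
    (fun t ht => ⟨hQlb t ht, hQub t ht⟩) (fun t ht => ⟨hR t ht, hRub t ht⟩) hQmax hfix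
    s (T - 1 - i)
  have hPD : (Pts A B T Q R i s).PosDef := hQminPD.of_le hlb
  exact ⟨hPD.isHermitian, hlb, hub, hPD⟩

/-- Every truncated Riccati value matrix `P_{i|s}` is symmetric and sandwiched between
`Q̄_min` and `P̄_max` in the Loewner order; in particular it is positive definite. -/
theorem truncated_riccati_sandwich {n m : ℕ} (hn : 1 ≤ n) (hm : 1 ≤ m)
    (A : Matrix (Fin n) (Fin n) ℝ) (B : Matrix (Fin n) (Fin m) ℝ)
    (T : ℕ) (hT : 2 ≤ T)
    (Q : ℕ → Matrix (Fin n) (Fin n) ℝ) (R : ℕ → Matrix (Fin m) (Fin m) ℝ)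
    (hQ : ∀ t ≤ T - 1, (Q t).PosSemidef) (hR : ∀ t ≤ T - 2, (R t).PosDef)
    (Qmin Qmax : Matrix (Fin n) (Fin n) ℝ) (Rmin Rmax : Matrix (Fin m) (Fin m) ℝ)
    (hQminPD : Qmin.PosDef) (hRminPD : Rmin.PosDef)
    (hQmaxH : Qmax.IsHermitian) (hRmaxH : Rmax.IsHermitian)
    (hQlb : ∀ t ≤ T - 1, (Q t - Qmin).PosSemidef)
    (hQub : ∀ t ≤ T - 1, (Qmax - Q t).PosSemidef)
    (hRlb : ∀ t ≤ T - 2, (R t - Rmin).PosSemidef)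
    (hRub : ∀ t ≤ T - 2, (Rmax - R t).PosSemidef)
    (Pm : Matrix (Fin n) (Fin n) ℝ) (hPmPD : Pm.PosDef)
    (hDARE : Pm = Qmax + Aᵀ * Pm * A -
      Aᵀ * Pm * B * (Rmax + Bᵀ * Pm * B)⁻¹ * Bᵀ * Pm * A) :
    ∀ i ≤ T - 1, ∀ s ≤ T - 1,
      (Pts A B T Q R i s).IsHermitian ∧
      (Pts A B T Q R i s - Qmin).PosSemidef ∧
      (Pm - Pts A B T Q R i s).PosSemidef ∧
      (Pts A B T Q R i s).PosDef :=
  truncated_riccati_sandwich_general A B T Q R hR Qmin Qmax Rmax hQminPD hQlb hQub hRub Pm hPmPD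
    hDARE
end
end

section
/- For all indices 0 ≤ i ≤ t ≤ t₀ ≤ T−1, the truncated Riccati matrices satisfy ‖P_{i|t} − P_{i|t₀}‖ ≤ (λ_max(P̄_max)²/λ_min(Q̄_min))·γ^{t+1−i}. -/
open Matrix Finset
open scoped Matrix.Norms.L2Operator

noncomputable section

variable {n m : ℕ}

/-! By completing the square, the Riccati step `F(P)` is the minimum over gains `K` of
`(A + B K)ᵀ P (A + B K) + Kᵀ R K + Q`; hence it is monotone in `(R, Q, P)`, and every `P_{i|s}`
lies between `Q̄_min` and `P̄_max`, the fixed point of the step with the largest costs.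
For two recursions with the same costs, `F(P₁) - F(P₂) ⪯ Lᵀ (P₁ - P₂) L` with `L` the closed loop
of `P₂`, while `Lᵀ P₂ L ⪯ F(P₂) - Q ⪯ Aᵀ P₂ A ⪯ α` and `β ⪯ Q` give `Lᵀ P₂ L ⪯ γ F(P₂)`.
So a relative bound `P₁ - P₂ ⪯ c P₂` improves by the factor `γ` at each backward step.
Below `t + 1`, `P_{·|t}` and `P_{·|t₀}` obey the same recursion, and at `t + 1` both lie in
`[Q̄_min, P̄_max]`, so `c = λ_max(P̄_max) / λ_min(Q̄_min)` works there. -/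

open scoped MatrixOrder

namespace TruncatedRiccati

section LoewnerOrder

variable {ι κ : Type*} [Fintype ι] [Fintype κ]

lemma posSemidef_transpose_mul_mul {M : Matrix ι ι ℝ} (hM : M.PosSemidef) (C : Matrix ι κ ℝ) :
    (Cᵀ * M * C).PosSemidef := by
  simpa using hM.conjTranspose_mul_mul_same C

lemma transpose_mul_mul_le_transpose_mul_mul {X Y : Matrix ι ι ℝ} (h : X ≤ Y) (C : Matrix ι κ ℝ) :
    Cᵀ * X * C ≤ Cᵀ * Y * C := by
  rw [Matrix.le_iff, ← Matrix.sub_mul, ← Matrix.mul_sub]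
  exact posSemidef_transpose_mul_mul h C

lemma norm_le_of_neg_smul_one_le_of_le_smul_one [DecidableEq ι] {M : Matrix ι ι ℝ}
    (hM : M.IsHermitian) {c : ℝ} (hc : 0 ≤ c) (hlow : -(c • 1) ≤ M) (hup : M ≤ c • 1) :
    ‖M‖ ≤ c := by
  have hM' := isHermitian_iff_isSelfAdjoint.mp hM
  rw [← neg_smul, ← Algebra.algebraMap_eq_smul_one] at hlow
  rw [← Algebra.algebraMap_eq_smul_one] at hup
  rw [← cfc_id' ℝ M]
  exact norm_cfc_le hc fun x hx ↦ abs_le.mpr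
    ⟨(algebraMap_le_iff_le_spectrum hM').mp hlow x hx,
      (le_algebraMap_iff_spectrum_le hM').mp hup x hx⟩

variable {k : ℕ} {M : Matrix (Fin k) (Fin k) ℝ}

lemma le_lmax_smul_one (hM : M.IsHermitian) : M ≤ lmax M • 1 := by
  rw [← Algebra.algebraMap_eq_smul_one]
  exact le_algebraMap_of_spectrum_le
    (fun _ hx ↦ le_csSup (Matrix.finite_real_spectrum (A := M)).bddAbove hx)
    (isHermitian_iff_isSelfAdjoint.mp hM)

lemma lmin_smul_one_le (hM : M.IsHermitian) : lmin M • 1 ≤ M := by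
  rw [← Algebra.algebraMap_eq_smul_one]
  exact algebraMap_le_of_le_spectrum
    (fun _ hx ↦ csInf_le (Matrix.finite_real_spectrum (A := M)).bddBelow hx)
    (isHermitian_iff_isSelfAdjoint.mp hM)

lemma lmax_nonneg (hM : M.PosSemidef) : 0 ≤ lmax M :=
  Real.sSup_nonneg fun _ hx ↦ spectrum_nonneg_of_nonneg hM.nonneg hx

lemma lmin_nonneg (hM : M.PosSemidef) : 0 ≤ lmin M :=
  Real.sInf_nonneg fun _ hx ↦ spectrum_nonneg_of_nonneg hM.nonneg hx

lemma lmin_pos (hk : 1 ≤ k) (hM : M.PosDef) : 0 < lmin M := by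
  have : Nonempty (Fin k) := ⟨⟨0, hk⟩⟩
  rw [lmin, hM.isHermitian.spectrum_real_eq_range_eigenvalues]
  obtain ⟨i, hi⟩ := (Set.range_nonempty _).csInf_mem (Set.finite_range hM.isHermitian.eigenvalues)
  rw [← hi]
  exact hM.eigenvalues_pos i

lemma sub_le_smul_of_mem_Icc (hk : 1 ≤ k) {Qmin Pm P₁ P₂ : Matrix (Fin k) (Fin k) ℝ}
    (hQmin : Qmin.PosDef) (hPm : Pm.PosSemidef) (h₁ : P₁ ∈ Set.Icc Qmin Pm)
    (h₂ : P₂ ∈ Set.Icc Qmin Pm) : P₁ - P₂ ≤ (lmax Pm / lmin Qmin) • P₂ := by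
  have hl := lmin_pos hk hQmin
  have hc : 0 ≤ lmax Pm / lmin Qmin := div_nonneg (lmax_nonneg hPm) hl.le
  calc P₁ - P₂ ≤ P₁ := sub_le_self _ (hQmin.posSemidef.nonneg.trans h₂.1)
    _ ≤ lmax Pm • 1 := h₁.2.trans (le_lmax_smul_one hPm.isHermitian)
    _ = (lmax Pm / lmin Qmin) • lmin Qmin • 1 := by rw [smul_smul, div_mul_cancel₀ _ hl.ne']
    _ ≤ (lmax Pm / lmin Qmin) • Qmin :=
        smul_le_smul_of_nonneg_left (lmin_smul_one_le hQmin.isHermitian) hc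
    _ ≤ (lmax Pm / lmin Qmin) • P₂ := smul_le_smul_of_nonneg_left h₂.1 hc

lemma norm_sub_le_of_sub_le_smul {P₁ P₂ Pm : Matrix (Fin k) (Fin k) ℝ} (hP₁ : P₁.IsHermitian)
    (hP₂ : P₂.IsHermitian) (hPm : Pm.PosSemidef) (hle₁ : P₁ ≤ Pm) (hle₂ : P₂ ≤ Pm) {c : ℝ}
    (hc : 0 ≤ c) (h₁₂ : P₁ - P₂ ≤ c • P₂) (h₂₁ : P₂ - P₁ ≤ c • P₁) :
    ‖P₁ - P₂‖ ≤ c * lmax Pm := by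
  have hbound {P : Matrix (Fin k) (Fin k) ℝ} (h : P ≤ Pm) : c • P ≤ (c * lmax Pm) • 1 := by
    rw [mul_smul]
    exact smul_le_smul_of_nonneg_left (h.trans (le_lmax_smul_one hPm.isHermitian)) hc
  refine norm_le_of_neg_smul_one_le_of_le_smul_one (hP₁.sub hP₂)
    (mul_nonneg hc (lmax_nonneg hPm)) ?_ (h₁₂.trans (hbound hle₂))
  rw [neg_le, neg_sub]
  exact h₂₁.trans (hbound hle₁)

end LoewnerOrder

lemma transpose_mul_mul_add_eq_complete_square {ι κ : Type*} [Fintype ι] [Fintype κ]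
    [DecidableEq κ] {S : Matrix κ κ ℝ} (hS : Sᵀ = S) (hdet : IsUnit S.det) (G K : Matrix κ ι ℝ) :
    Kᵀ * S * K + Gᵀ * K + Kᵀ * G
      = -(Gᵀ * (S⁻¹ * G)) + (K + S⁻¹ * G)ᵀ * S * (K + S⁻¹ * G) := by
  have hSinv : (S⁻¹)ᵀ = S⁻¹ := by rw [transpose_nonsing_inv, hS]
  have cross_left : Kᵀ * S * (S⁻¹ * G) = Kᵀ * G := by
    rw [Matrix.mul_assoc Kᵀ, ← Matrix.mul_assoc S, mul_nonsing_inv S hdet, Matrix.one_mul]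
  have cross_right (N : Matrix κ ι ℝ) : (S⁻¹ * G)ᵀ * S * N = Gᵀ * N := by
    rw [transpose_mul, hSinv, Matrix.mul_assoc, Matrix.mul_assoc, ← Matrix.mul_assoc S⁻¹,
      nonsing_inv_mul S hdet, Matrix.one_mul]
  rw [transpose_add, Matrix.add_mul, Matrix.add_mul, Matrix.mul_add, Matrix.mul_add, cross_left,
    cross_right, cross_right]
  abel

section RiccatiStep

variable (A : Matrix (Fin n) (Fin n) ℝ) (B : Matrix (Fin n) (Fin m) ℝ)
  {R : Matrix (Fin m) (Fin m) ℝ} {Q P : Matrix (Fin n) (Fin n) ℝ}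

def feedbackCost (R : Matrix (Fin m) (Fin m) ℝ) (Q P : Matrix (Fin n) (Fin n) ℝ)
    (K : Matrix (Fin m) (Fin n) ℝ) : Matrix (Fin n) (Fin n) ℝ :=
  (A + B * K)ᵀ * P * (A + B * K) + Kᵀ * R * K + Q

lemma feedbackCost_eq_ricStep_add (hR : R.PosDef) (hP : P.PosSemidef)
    (K : Matrix (Fin m) (Fin n) ℝ) :
    feedbackCost A B R Q P K = ricStep A B R Q P
      + (K - gainK A B R P)ᵀ * (R + Bᵀ * P * B) * (K - gainK A B R P) := by
  set S := R + Bᵀ * P * B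
  set G := Bᵀ * P * A
  have hS : S.PosDef := hR.add_posSemidef (posSemidef_transpose_mul_mul hP B)
  have hSsymm : Sᵀ = S := by simpa using hS.isHermitian.eq
  have hPsymm : Pᵀ = P := by simpa using hP.isHermitian.eq
  have hGt : Gᵀ = Aᵀ * P * B := by simp [G, hPsymm, Matrix.mul_assoc]
  have hgain : gainK A B R P = -(S⁻¹ * G) := by simp only [gainK, S, G, Matrix.mul_assoc]
  have hric : ricStep A B R Q P = Aᵀ * P * A + Q + -(Gᵀ * (S⁻¹ * G)) := by
    rw [ricStep, hgain, hGt, Matrix.mul_neg]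
  have hcost : feedbackCost A B R Q P K = Aᵀ * P * A + Q + (Kᵀ * S * K + Gᵀ * K + Kᵀ * G) := by
    simp only [feedbackCost, S, G, transpose_add, transpose_mul, transpose_transpose,
      hPsymm, Matrix.mul_add, Matrix.add_mul, Matrix.mul_assoc]
    abel
  rw [hcost, hric, hgain, sub_neg_eq_add,
    transpose_mul_mul_add_eq_complete_square hSsymm (isUnit_iff_ne_zero.mpr hS.det_pos.ne') G K]
  abel

lemma ricStep_eq_feedbackCost_gainK (hR : R.PosDef) (hP : P.PosSemidef) :
    ricStep A B R Q P = feedbackCost A B R Q P (gainK A B R P) := by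
  simp [feedbackCost_eq_ricStep_add A B hR hP]

lemma ricStep_le_feedbackCost (hR : R.PosDef) (hP : P.PosSemidef) (K : Matrix (Fin m) (Fin n) ℝ) :
    ricStep A B R Q P ≤ feedbackCost A B R Q P K := by
  rw [feedbackCost_eq_ricStep_add A B hR hP, le_add_iff_nonneg_right]
  exact (posSemidef_transpose_mul_mul
    (hR.add_posSemidef (posSemidef_transpose_mul_mul hP B)).posSemidef _).nonneg

lemma le_ricStep (hR : R.PosDef) (hP : P.PosSemidef) : Q ≤ ricStep A B R Q P := by
  rw [ricStep_eq_feedbackCost_gainK A B hR hP, feedbackCost, le_add_iff_nonneg_left]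
  exact ((posSemidef_transpose_mul_mul hP _).add
    (posSemidef_transpose_mul_mul hR.posSemidef _)).nonneg

lemma feedbackCost_mono {R₁ R₂ : Matrix (Fin m) (Fin m) ℝ} {Q₁ Q₂ P₁ P₂ : Matrix (Fin n) (Fin n) ℝ}
    (hR : R₁ ≤ R₂) (hQ : Q₁ ≤ Q₂) (hP : P₁ ≤ P₂) (K : Matrix (Fin m) (Fin n) ℝ) :
    feedbackCost A B R₁ Q₁ P₁ K ≤ feedbackCost A B R₂ Q₂ P₂ K :=
  add_le_add (add_le_add (transpose_mul_mul_le_transpose_mul_mul hP _)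
    (transpose_mul_mul_le_transpose_mul_mul hR _)) hQ

lemma ricStep_mono {R₁ R₂ : Matrix (Fin m) (Fin m) ℝ} {Q₁ Q₂ P₁ P₂ : Matrix (Fin n) (Fin n) ℝ}
    (hR₁ : R₁.PosDef) (hR₂ : R₂.PosDef) (hP₁ : P₁.PosSemidef) (hP₂ : P₂.PosSemidef)
    (hR : R₁ ≤ R₂) (hQ : Q₁ ≤ Q₂) (hP : P₁ ≤ P₂) :
    ricStep A B R₁ Q₁ P₁ ≤ ricStep A B R₂ Q₂ P₂ := by
  rw [ricStep_eq_feedbackCost_gainK A B hR₂ hP₂]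
  exact (ricStep_le_feedbackCost A B hR₁ hP₁ _).trans (feedbackCost_mono A B hR hQ hP _)

lemma ricStep_sub_le {P₁ P₂ : Matrix (Fin n) (Fin n) ℝ} (hR : R.PosDef) (hP₁ : P₁.PosSemidef)
    (hP₂ : P₂.PosSemidef) :
    ricStep A B R Q P₁ - ricStep A B R Q P₂
      ≤ (A + B * gainK A B R P₂)ᵀ * (P₁ - P₂) * (A + B * gainK A B R P₂) := by
  calc ricStep A B R Q P₁ - ricStep A B R Q P₂
      ≤ feedbackCost A B R Q P₁ (gainK A B R P₂) - feedbackCost A B R Q P₂ (gainK A B R P₂) := by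
        rw [← ricStep_eq_feedbackCost_gainK A B hR hP₂]
        exact sub_le_sub_right (ricStep_le_feedbackCost A B hR hP₁ _) _
    _ = _ := by
        simp only [feedbackCost, Matrix.mul_sub, Matrix.sub_mul]
        abel

lemma closedLoop_le_smul_ricStep (hR : R.PosDef) (hP : P.PosSemidef) {α β : ℝ} (hα : 0 < α)
    (hβ : 0 ≤ β) (hAPA : Aᵀ * P * A ≤ α • 1) (hQ : β • 1 ≤ Q) :
    (A + B * gainK A B R P)ᵀ * P * (A + B * gainK A B R P) ≤ (α / (α + β)) • ricStep A B R Q P := by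
  set γ := α / (α + β) with hγdef
  set F := ricStep A B R Q P with hFdef
  have hγ : 0 ≤ γ := by positivity
  have hγ1 : 0 ≤ 1 - γ := by
    rw [sub_nonneg, hγdef, div_le_one (by positivity)]
    linarith
  have hγ' : (1 - γ) * α = γ * β := by
    rw [hγdef]
    field_simp
    ring
  have hFQ : F - Q ≤ α • 1 := by
    refine (sub_le_iff_le_add.mpr ?_).trans hAPA
    simpa [feedbackCost] using ricStep_le_feedbackCost A B (Q := Q) hR hP 0
  have hclosed : (A + B * gainK A B R P)ᵀ * P * (A + B * gainK A B R P) ≤ F - Q := by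
    rw [hFdef, ricStep_eq_feedbackCost_gainK A B hR hP, feedbackCost, add_sub_cancel_right]
    exact le_add_of_nonneg_right (posSemidef_transpose_mul_mul hR.posSemidef _).nonneg
  -- `(1 - γ) (F - Q) ⪯ (1 - γ) α = γ β ⪯ γ Q` rearranges to `F - Q ⪯ γ F`.
  have hmix : (1 - γ) • (F - Q) ≤ γ • Q := by
    calc (1 - γ) • (F - Q) ≤ (1 - γ) • α • (1 : Matrix (Fin n) (Fin n) ℝ) :=
          smul_le_smul_of_nonneg_left hFQ hγ1
      _ = γ • β • (1 : Matrix (Fin n) (Fin n) ℝ) := by rw [smul_smul, smul_smul, hγ']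
      _ ≤ γ • Q := smul_le_smul_of_nonneg_left hQ hγ
  refine hclosed.trans ?_
  rw [← sub_nonneg] at hmix ⊢
  convert hmix using 1
  module

lemma ricStep_sub_le_smul {P₁ P₂ : Matrix (Fin n) (Fin n) ℝ} (hR : R.PosDef)
    (hP₁ : P₁.PosSemidef) (hP₂ : P₂.PosSemidef) {α β c : ℝ} (hα : 0 < α) (hβ : 0 ≤ β)
    (hAPA : Aᵀ * P₂ * A ≤ α • 1) (hQ : β • 1 ≤ Q) (hc : 0 ≤ c) (h : P₁ - P₂ ≤ c • P₂) :
    ricStep A B R Q P₁ - ricStep A B R Q P₂ ≤ (c * (α / (α + β))) • ricStep A B R Q P₂ := by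
  set L := A + B * gainK A B R P₂
  calc ricStep A B R Q P₁ - ricStep A B R Q P₂ ≤ Lᵀ * (P₁ - P₂) * L := ricStep_sub_le A B hR hP₁ hP₂
    _ ≤ Lᵀ * (c • P₂) * L := transpose_mul_mul_le_transpose_mul_mul h L
    _ = c • (Lᵀ * P₂ * L) := by rw [Matrix.mul_smul, Matrix.smul_mul]
    _ ≤ c • (α / (α + β)) • ricStep A B R Q P₂ :=
        smul_le_smul_of_nonneg_left (closedLoop_le_smul_ricStep A B hR hP₂ hα hβ hAPA hQ) hc
    _ = _ := smul_smul _ _ _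

lemma ricStep_eq_of_dare
    (h : P = Q + Aᵀ * P * A - Aᵀ * P * B * (R + Bᵀ * P * B)⁻¹ * Bᵀ * P * A) :
    ricStep A B R Q P = P := by
  rw [ricStep, gainK, Matrix.mul_neg]
  conv_rhs => rw [h]
  simp only [sub_eq_add_neg, Matrix.mul_assoc]
  abel

end RiccatiStep

lemma sub_le_smul_pow_of_ricStep (A : Matrix (Fin n) (Fin n) ℝ) (B : Matrix (Fin n) (Fin m) ℝ)
    {R : ℕ → Matrix (Fin m) (Fin m) ℝ}
    {Q P₁ P₂ : ℕ → Matrix (Fin n) (Fin n) ℝ} {t : ℕ} {α β c : ℝ} (hα : 0 < α) (hβ : 0 ≤ β)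
    (hc : 0 ≤ c) (hP₁ : ∀ i ≤ t, P₁ i = ricStep A B (R i) (Q i) (P₁ (i + 1)))
    (hP₂ : ∀ i ≤ t, P₂ i = ricStep A B (R i) (Q i) (P₂ (i + 1)))
    (hR : ∀ i ≤ t, (R i).PosDef) (hpsd₁ : ∀ i, (P₁ i).PosSemidef) (hpsd₂ : ∀ i, (P₂ i).PosSemidef)
    (hAPA : ∀ i ≤ t, Aᵀ * P₂ (i + 1) * A ≤ α • 1) (hQ : ∀ i ≤ t, β • 1 ≤ Q i)
    (hbase : P₁ (t + 1) - P₂ (t + 1) ≤ c • P₂ (t + 1)) {i : ℕ} (hi : i ≤ t + 1) :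
    P₁ i - P₂ i ≤ (c * (α / (α + β)) ^ (t + 1 - i)) • P₂ i := by
  induction hi using Nat.decreasingInduction with
  | self => simpa using hbase
  | of_succ i hi ih =>
    have hit : i ≤ t := by omega
    rw [hP₁ i hit, hP₂ i hit, show t + 1 - i = t + 1 - (i + 1) + 1 by omega, pow_succ, ← mul_assoc]
    exact ricStep_sub_le_smul A B (hR i hit) (hpsd₁ _) (hpsd₂ _) hα hβ (hAPA i hit) (hQ i hit)
      (by positivity) ih

lemma trunc_eq_min {N : Type*} (Q : ℕ → N) (i s : ℕ) : trunc Q i s = Q (min i s) := by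
  unfold trunc
  split_ifs with h
  · rw [min_eq_left h]
  · rw [min_eq_right (not_le.mp h).le]

section Truncated

variable {A : Matrix (Fin n) (Fin n) ℝ} {B : Matrix (Fin n) (Fin m) ℝ} {T : ℕ}
  {Q : ℕ → Matrix (Fin n) (Fin n) ℝ} {R : ℕ → Matrix (Fin m) (Fin m) ℝ}

lemma Pts_eq_ricStep {i s : ℕ} (hi : i + 2 ≤ T) (his : i ≤ s) :
    Pts A B T Q R i s = ricStep A B (R i) (Q i) (Pts A B T Q R (i + 1) s) := by
  rw [Pts, show T - 1 - i = T - 2 - i + 1 by omega, ricBackTr,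
    show T - 2 - (T - 2 - i) = i by omega, trunc_eq_min, trunc_eq_min, min_eq_left his, Pts, show T - 1 - (i + 1) = T - 2 - i by omega]

lemma Pts_mem_Icc {Qmin Qmax Pm : Matrix (Fin n) (Fin n) ℝ} {Rmax : Matrix (Fin m) (Fin m) ℝ}
    (hQmin : Qmin.PosSemidef) (hQlb : ∀ t ≤ T - 1, Qmin ≤ Q t) (hQub : ∀ t ≤ T - 1, Q t ≤ Qmax)
    (hR : ∀ t ≤ T - 2, (R t).PosDef) (hRub : ∀ t ≤ T - 2, R t ≤ Rmax) (hRmax : Rmax.PosDef)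
    (hPm : Pm.PosSemidef) (hfix : ricStep A B Rmax Qmax Pm = Pm) (i : ℕ) {s : ℕ}
    (hs : s ≤ T - 1) : Pts A B T Q R i s ∈ Set.Icc Qmin Pm := by
  have hQmaxPm : Qmax ≤ Pm := hfix ▸ le_ricStep A B hRmax hPm
  have hQ (j : ℕ) : trunc Q j s ∈ Set.Icc Qmin Qmax := by
    rw [trunc_eq_min]
    exact ⟨hQlb _ (by omega), hQub _ (by omega)⟩
  unfold Pts
  induction T - 1 - i with
  | zero => exact ⟨(hQ _).1, (hQ _).2.trans hQmaxPm⟩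
  | succ d ih =>
    have hRd : (trunc R (T - 2 - d) s).PosDef ∧ trunc R (T - 2 - d) s ≤ Rmax := by
      rw [trunc_eq_min]
      exact ⟨hR _ (by omega), hRub _ (by omega)⟩
    have hP := (hQmin.nonneg.trans ih.1).posSemidef
    refine ⟨(hQ _).1.trans (le_ricStep A B hRd.1 hP), ?_⟩
    rw [← hfix]
    exact ricStep_mono A B hRd.1 hRmax hP hPm hRd.2 (hQ _).2 ih.2

lemma transpose_mul_Pts_mul_le_iSup {i s : ℕ} (hi : i + 2 ≤ T) (hs : s ≤ T - 1)
    (hP : (Pts A B T Q R (i + 1) s).PosSemidef) :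
    Aᵀ * Pts A B T Q R (i + 1) s * A
      ≤ (⨆ p : Fin (T - 1) × Fin T, lmax (Aᵀ * Pts A B T Q R ((p.1 : ℕ) + 1) (p.2 : ℕ) * A)) • 1 :=
  (le_lmax_smul_one (posSemidef_transpose_mul_mul hP A).isHermitian).trans
    (smul_le_smul_of_nonneg_right (le_ciSup (f := fun p : Fin (T - 1) × Fin T ↦
      lmax (Aᵀ * Pts A B T Q R ((p.1 : ℕ) + 1) (p.2 : ℕ) * A)) (Set.finite_range _).bddAbove
      ⟨⟨i, by omega⟩, ⟨s, by omega⟩⟩) zero_le_one)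

lemma iInf_lmin_smul_one_le {i : ℕ} (hi : i + 2 ≤ T) (hQ : (Q i).IsHermitian) :
    (⨅ t : Fin (T - 1), lmin (Q (t : ℕ))) • 1 ≤ Q i :=
  (smul_le_smul_of_nonneg_right (ciInf_le (Set.finite_range _).bddBelow
    (⟨i, by omega⟩ : Fin (T - 1))) zero_le_one).trans (lmin_smul_one_le hQ)

lemma Pts_sub_le_smul_pow {Qmin Pm : Matrix (Fin n) (Fin n) ℝ} (hn : 1 ≤ n) (hQmin : Qmin.PosDef)
    (hPm : Pm.PosSemidef) (hR : ∀ t ≤ T - 2, (R t).PosDef)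
    (hbounds : ∀ j s, s ≤ T - 1 → Pts A B T Q R j s ∈ Set.Icc Qmin Pm) {α β : ℝ} (hα : 0 < α)
    (hβ : 0 ≤ β)
    (hAPA : ∀ j s, j + 2 ≤ T → s ≤ T - 1 → Aᵀ * Pts A B T Q R (j + 1) s * A ≤ α • 1)
    (hQ : ∀ j, j + 2 ≤ T → β • 1 ≤ Q j) {i t s₁ s₂ : ℕ} (hit : i ≤ t) (ht : t + 2 ≤ T)
    (hs₁ : t ≤ s₁) (hs₂ : t ≤ s₂) (hs₁T : s₁ ≤ T - 1) (hs₂T : s₂ ≤ T - 1) :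
    Pts A B T Q R i s₁ - Pts A B T Q R i s₂
      ≤ (lmax Pm / lmin Qmin * (α / (α + β)) ^ (t + 1 - i)) • Pts A B T Q R i s₂ :=
  have hpsd (j : ℕ) {s : ℕ} (hs : s ≤ T - 1) : (Pts A B T Q R j s).PosSemidef :=
    (hQmin.posSemidef.nonneg.trans (hbounds j s hs).1).posSemidef
  sub_le_smul_pow_of_ricStep A B (P₁ := fun j ↦ Pts A B T Q R j s₁)
    (P₂ := fun j ↦ Pts A B T Q R j s₂) hα hβ
    (div_nonneg (lmax_nonneg hPm) (lmin_nonneg hQmin.posSemidef))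
    (fun _ _ ↦ Pts_eq_ricStep (by omega) (by omega))
    (fun _ _ ↦ Pts_eq_ricStep (by omega) (by omega))
    (fun j _ ↦ hR j (by omega)) (fun j ↦ hpsd j hs₁T) (fun j ↦ hpsd j hs₂T)
    (fun j _ ↦ hAPA j s₂ (by omega) hs₂T) (fun j _ ↦ hQ j (by omega))
    (sub_le_smul_of_mem_Icc hn hQmin hPm (hbounds _ _ hs₁T) (hbounds _ _ hs₂T)) (by omega)

end Truncated

end TruncatedRiccati

open TruncatedRiccati

theorem truncated_riccati_value_convergence_general {n m : ℕ} (hn : 1 ≤ n)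
    (A : Matrix (Fin n) (Fin n) ℝ) (B : Matrix (Fin n) (Fin m) ℝ)
    (T : ℕ)
    (Q : ℕ → Matrix (Fin n) (Fin n) ℝ) (R : ℕ → Matrix (Fin m) (Fin m) ℝ)
    (hR : ∀ t ≤ T - 2, (R t).PosDef)
    (Qmin Qmax : Matrix (Fin n) (Fin n) ℝ) (Rmax : Matrix (Fin m) (Fin m) ℝ)
    (hQminPD : Qmin.PosDef)
    (hQlb : ∀ t ≤ T - 1, (Q t - Qmin).PosSemidef)
    (hQub : ∀ t ≤ T - 1, (Qmax - Q t).PosSemidef)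
    (hRub : ∀ t ≤ T - 2, (Rmax - R t).PosSemidef)
    (Pm : Matrix (Fin n) (Fin n) ℝ) (hPmPD : Pm.PosDef)
    (hDARE : Pm = Qmax + Aᵀ * Pm * A -
      Aᵀ * Pm * B * (Rmax + Bᵀ * Pm * B)⁻¹ * Bᵀ * Pm * A)
    (α : ℝ) (hα : α = ⨆ p : Fin (T - 1) × Fin T,
      lmax (Aᵀ * Pts A B T Q R ((p.1 : ℕ) + 1) (p.2 : ℕ) * A))
    (hαpos : 0 < α)
    (β : ℝ) (hβ : β = ⨅ t : Fin (T - 1), lmin (Q (t : ℕ)))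
    (γ : ℝ) (hγ : γ = α / (α + β)) :
    ∀ i t t₀ : ℕ, i ≤ t → t ≤ t₀ → t₀ ≤ T - 1 →
      ‖Pts A B T Q R i t - Pts A B T Q R i t₀‖ ≤
        (lmax Pm) ^ 2 / lmin Qmin * γ ^ (t + 1 - i) := by
  intro i t t₀ hit htt₀ ht₀
  have hQmin := hQminPD.posSemidef
  have hPm := hPmPD.posSemidef
  have hQ (j : ℕ) (hj : j ≤ T - 1) : (Q j).PosSemidef := (hQmin.nonneg.trans (hQlb j hj)).posSemidef
  have hRmax : Rmax.PosDef := by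
    simpa using (hR 0 (Nat.zero_le _)).add_posSemidef (hRub 0 (Nat.zero_le _))
  have hbounds (j s : ℕ) (hs : s ≤ T - 1) : Pts A B T Q R j s ∈ Set.Icc Qmin Pm :=
    Pts_mem_Icc hQmin hQlb hQub hR hRub hRmax hPm (ricStep_eq_of_dare A B hDARE) j hs
  have hpsd (j s : ℕ) (hs : s ≤ T - 1) : (Pts A B T Q R j s).PosSemidef :=
    (hQmin.nonneg.trans (hbounds j s hs).1).posSemidef
  have hAPA (j s : ℕ) (hj : j + 2 ≤ T) (hs : s ≤ T - 1) :
      Aᵀ * Pts A B T Q R (j + 1) s * A ≤ α • 1 :=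
    hα ▸ transpose_mul_Pts_mul_le_iSup hj hs (hpsd _ _ hs)
  have hQβ (j : ℕ) (hj : j + 2 ≤ T) : β • 1 ≤ Q j :=
    hβ ▸ iInf_lmin_smul_one_le hj (hQ j (by omega)).isHermitian
  have hβ0 : 0 ≤ β := hβ ▸ Real.iInf_nonneg fun j ↦ lmin_nonneg (hQ j (by omega))
  have hγ0 : 0 ≤ γ := hγ ▸ by positivity
  obtain rfl | hlt := htt₀.eq_or_lt
  · simpa using mul_nonneg (div_nonneg (sq_nonneg (lmax Pm)) (lmin_nonneg hQmin)) (pow_nonneg hγ0 _)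
  have hcontract {s₁ s₂ : ℕ} (h₁ : t ≤ s₁) (h₂ : t ≤ s₂) (h₁T : s₁ ≤ T - 1) (h₂T : s₂ ≤ T - 1) :
      Pts A B T Q R i s₁ - Pts A B T Q R i s₂
        ≤ (lmax Pm / lmin Qmin * γ ^ (t + 1 - i)) • Pts A B T Q R i s₂ :=
    hγ ▸ Pts_sub_le_smul_pow hn hQminPD hPm hR hbounds hαpos hβ0 hAPA hQβ hit (by omega)
      h₁ h₂ h₁T h₂T
  calc ‖Pts A B T Q R i t - Pts A B T Q R i t₀‖
      ≤ lmax Pm / lmin Qmin * γ ^ (t + 1 - i) * lmax Pm :=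
        norm_sub_le_of_sub_le_smul (hpsd i t (by omega)).isHermitian
          (hpsd i t₀ ht₀).isHermitian hPm (hbounds i t (by omega)).2
          (hbounds i t₀ ht₀).2
          (mul_nonneg (div_nonneg (lmax_nonneg hPm) (lmin_nonneg hQmin)) (pow_nonneg hγ0 _))
          (hcontract le_rfl hlt.le (by omega) ht₀) (hcontract hlt.le le_rfl ht₀ (by omega))
    _ = lmax Pm ^ 2 / lmin Qmin * γ ^ (t + 1 - i) := by ring

/-- Exponential convergence of the truncated Riccati value matrices:
`‖P_{i|t} − P_{i|t₀}‖ ≤ (λ_max(P̄_max)²/λ_min(Q̄_min))·γ^{t+1−i}`. -/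
theorem truncated_riccati_value_convergence {n m : ℕ} (hn : 1 ≤ n) (hm : 1 ≤ m)
    (A : Matrix (Fin n) (Fin n) ℝ) (B : Matrix (Fin n) (Fin m) ℝ)
    (T : ℕ) (hT : 2 ≤ T)
    (Q : ℕ → Matrix (Fin n) (Fin n) ℝ) (R : ℕ → Matrix (Fin m) (Fin m) ℝ)
    (hQ : ∀ t ≤ T - 1, (Q t).PosSemidef) (hR : ∀ t ≤ T - 2, (R t).PosDef)
    (Qmin Qmax : Matrix (Fin n) (Fin n) ℝ) (Rmin Rmax : Matrix (Fin m) (Fin m) ℝ)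
    (hQminPD : Qmin.PosDef) (hRminPD : Rmin.PosDef)
    (hQmaxH : Qmax.IsHermitian) (hRmaxH : Rmax.IsHermitian)
    (hQlb : ∀ t ≤ T - 1, (Q t - Qmin).PosSemidef)
    (hQub : ∀ t ≤ T - 1, (Qmax - Q t).PosSemidef)
    (hRlb : ∀ t ≤ T - 2, (R t - Rmin).PosSemidef)
    (hRub : ∀ t ≤ T - 2, (Rmax - R t).PosSemidef)
    (Pm : Matrix (Fin n) (Fin n) ℝ) (hPmPD : Pm.PosDef)
    (hDARE : Pm = Qmax + Aᵀ * Pm * A -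
      Aᵀ * Pm * B * (Rmax + Bᵀ * Pm * B)⁻¹ * Bᵀ * Pm * A)
    (α : ℝ) (hα : α = ⨆ p : Fin (T - 1) × Fin T,
      lmax (Aᵀ * Pts A B T Q R ((p.1 : ℕ) + 1) (p.2 : ℕ) * A))
    (hαpos : 0 < α)
    (β : ℝ) (hβ : β = ⨅ t : Fin (T - 1), lmin (Q (t : ℕ)))
    (γ : ℝ) (hγ : γ = α / (α + β)) :
    ∀ i t t₀ : ℕ, i ≤ t → t ≤ t₀ → t₀ ≤ T - 1 →
      ‖Pts A B T Q R i t - Pts A B T Q R i t₀‖ ≤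
        (lmax Pm) ^ 2 / lmin Qmin * γ ^ (t + 1 - i) :=
  truncated_riccati_value_convergence_general hn A B T Q R hR Qmin Qmax Rmax hQminPD hQlb hQub hRub
    Pm hPmPD hDARE α hα hαpos β hβ γ hγ
end
end
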